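/- Let y: [ε, T] → [0,∞) be absolutely continuous and g ∈ L¹(ε,T) nonnegative with y'(t) + h(t) ≤ g(t) y(t) a.e., where h ≥ 0 is integrable. Then for all t ∈ [ε,T]: (t-ε) y(t) + ∫_ε^t (τ-ε) h(τ) dτ ≤ exp((t-ε) + ∫_ε^t g(τ)dτ) · ∫_ε^t y(τ) dτ. -/

import Mathlib

/-!
With `Z(s) = (s - ε) y(s) + ∫_ε^s (τ - ε) h(τ) dτ`, the differential inequality gives
`Z' = y + (s - ε)(y' + h) ≤ y + (s - ε) g y ≤ y + g Z` a.e., because `g ≥ 0` and the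
`h`-integral is nonnegative. Since `Z(ε) = 0`, Gronwall's lemma for absolutely continuous
functions with an `L¹` coefficient, proved with the integrating factor `exp (-∫ g)` and the
fundamental theorem of calculus for absolutely continuous functions, yields
`Z(t) ≤ exp (∫_ε^t g) ∫_ε^t y`.
-/

open MeasureTheory Set Filter
open scoped NNReal

theorem LipschitzOnWith.comp_absolutelyContinuousOnInterval {X Y : Type*}
    [PseudoMetricSpace X] [PseudoMetricSpace Y] {φ : X → Y} {K : ℝ≥0} {s : Set X}
    {f : ℝ → X} {a b : ℝ} (hφ : LipschitzOnWith K φ s)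
    (hf : AbsolutelyContinuousOnInterval f a b) (hfs : MapsTo f (uIcc a b) s) :
    AbsolutelyContinuousOnInterval (φ ∘ f) a b := by
  unfold AbsolutelyContinuousOnInterval at hf ⊢
  refine squeeze_zero' (Eventually.of_forall fun _ ↦ Finset.sum_nonneg fun _ _ ↦ dist_nonneg)
    ?_ (mul_zero (K : ℝ) ▸ hf.const_mul (K : ℝ))
  filter_upwards [mem_inf_of_right (mem_principal_self _)] with E hE
  rw [Finset.mul_sum]
  gcongr with i hi
  exact hφ.dist_le_mul _ (hfs (hE.1 i hi).1) _ (hfs (hE.1 i hi).2)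

theorem LocallyLipschitz.comp_absolutelyContinuousOnInterval {E Y : Type*}
    [SeminormedAddCommGroup E] [PseudoMetricSpace Y] {φ : E → Y} {f : ℝ → E} {a b : ℝ}
    (hφ : LocallyLipschitz φ) (hf : AbsolutelyContinuousOnInterval f a b) :
    AbsolutelyContinuousOnInterval (φ ∘ f) a b := by
  have hcpt : IsCompact (f '' uIcc a b) := isCompact_uIcc.image_of_continuousOn hf.continuousOn
  obtain ⟨K, hK⟩ := LocallyLipschitzOn.exists_lipschitzOnWith_of_compact hcpt
    hφ.locallyLipschitzOn
  exact hK.comp_absolutelyContinuousOnInterval hf (mapsTo_image f _)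

theorem AbsolutelyContinuousOnInterval.le_of_ae_deriv_nonpos {f : ℝ → ℝ} {a b : ℝ}
    (hf : AbsolutelyContinuousOnInterval f a b) (hab : a ≤ b)
    (hf' : ∀ᵐ x, x ∈ Icc a b → deriv f x ≤ 0) : f b ≤ f a := by
  have : 0 ≤ ∫ x in a..b, -deriv f x :=
    intervalIntegral.integral_nonneg_of_ae_restrict hab <|
      (ae_restrict_iff' measurableSet_Icc).mpr <| by
        filter_upwards [hf'] with x hx hxI using neg_nonneg.mpr (hx hxI)
  rw [intervalIntegral.integral_neg, hf.integral_deriv_eq_sub] at this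
  linarith

theorem AbsolutelyContinuousOnInterval.le_exp_integral_mul_of_ae_deriv_le
    {Z u g : ℝ → ℝ} {a b : ℝ} (hab : a ≤ b) (hZ : AbsolutelyContinuousOnInterval Z a b)
    (hu : IntervalIntegrable u volume a b) (hg : IntervalIntegrable g volume a b)
    (hu0 : ∀ x ∈ Icc a b, 0 ≤ u x) (hg0 : ∀ x ∈ Icc a b, 0 ≤ g x)
    (hZ' : ∀ᵐ x, x ∈ Icc a b → deriv Z x ≤ u x + g x * Z x) :
    Z b ≤ Real.exp (∫ x in a..b, g x) * (Z a + ∫ x in a..b, u x) := by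
  set G := fun x ↦ ∫ s in a..x, g s
  set U := fun x ↦ ∫ s in a..x, u s
  have ha : a ∈ uIcc a b := left_mem_uIcc
  have hE : AbsolutelyContinuousOnInterval (fun x ↦ Real.exp (-G x)) a b :=
    Real.contDiff_exp.locallyLipschitz.comp_absolutelyContinuousOnInterval
      (hg.absolutelyContinuousOnInterval_intervalIntegral ha).fun_neg
  -- `Z e^{-G} - U` is nonincreasing: its derivative is `(Z' - g Z) e^{-G} - u ≤ u (e^{-G} - 1) ≤ 0`
  have hmono : Z b * Real.exp (-G b) - U b ≤ Z a * Real.exp (-G a) - U a := by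
    refine ((hZ.fun_mul hE).fun_sub (hu.absolutelyContinuousOnInterval_intervalIntegral ha))
      |>.le_of_ae_deriv_nonpos hab ?_
    filter_upwards [hZ.ae_differentiableAt, hg.ae_hasDerivAt_integral,
      hu.ae_hasDerivAt_integral, hZ'] with x hZx hGx hUx hx hxI
    have hxu : x ∈ uIcc a b := by rwa [uIcc_of_le hab]
    have hd : HasDerivAt (fun x ↦ Z x * Real.exp (-G x) - U x)
        (deriv Z x * Real.exp (-G x) + Z x * (Real.exp (-G x) * -g x) - u x) x :=
      ((hZx hxu).hasDerivAt.mul (hGx hxu a ha).neg.exp).sub (hUx hxu a ha)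
    rw [hd.deriv]
    have hG0 : 0 ≤ G x := intervalIntegral.integral_nonneg hxI.1 fun s hs ↦
      hg0 s ⟨hs.1, hs.2.trans hxI.2⟩
    have hE1 : Real.exp (-G x) ≤ 1 := Real.exp_le_one_iff.mpr (neg_nonpos.mpr hG0)
    nlinarith [hx hxI, hu0 x hxI, Real.exp_pos (-G x)]
  have hGa : G a = 0 := intervalIntegral.integral_same
  have hUa : U a = 0 := intervalIntegral.integral_same
  rw [hGa, hUa, neg_zero, Real.exp_zero, mul_one, sub_zero] at hmono
  calc Z b = Real.exp (G b) * (Z b * Real.exp (-G b)) := by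
        rw [Real.exp_neg]; field_simp
    _ ≤ Real.exp (G b) * (Z a + U b) := by gcongr; linarith

theorem sub_mul_add_integral_le_exp_integral_mul_integral {a b : ℝ} (hab : a ≤ b)
    {y y' h g : ℝ → ℝ} (hy0 : ∀ s ∈ Icc a b, 0 ≤ y s)
    (hy' : IntervalIntegrable y' volume a b) (hy : IntervalIntegrable y volume a b)
    (hh : IntervalIntegrable h volume a b) (hh0 : ∀ s ∈ Icc a b, 0 ≤ h s)
    (hg : IntervalIntegrable g volume a b) (hg0 : ∀ s ∈ Icc a b, 0 ≤ g s)
    (hFTC : ∀ s ∈ Icc a b, y s = y a + ∫ τ in a..s, y' τ)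
    (hineq : ∀ᵐ s, s ∈ Ioc a b → y' s + h s ≤ g s * y s) :
    (b - a) * y b + ∫ τ in a..b, (τ - a) * h τ ≤
      Real.exp (∫ τ in a..b, g τ) * ∫ τ in a..b, y τ := by
  -- `Y` agrees with `y` on `[a, b]` and is absolutely continuous by construction
  set Y := fun s ↦ y a + ∫ τ in a..s, y' τ
  set H := fun s ↦ ∫ τ in a..s, (τ - a) * h τ
  set Z := fun s ↦ (s - a) * Y s + H s
  have ha : a ∈ uIcc a b := left_mem_uIcc
  have hh' : IntervalIntegrable (fun τ ↦ (τ - a) * h τ) volume a b :=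
    hh.continuousOn_mul (continuous_id.sub continuous_const).continuousOn
  have hZ : AbsolutelyContinuousOnInterval Z a b :=
    ((contDiffOn_id.sub contDiffOn_const).absolutelyContinuousOnInterval.fun_mul
      (contDiffOn_const.absolutelyContinuousOnInterval.fun_add
        (hy'.absolutelyContinuousOnInterval_intervalIntegral ha))).fun_add
      (hh'.absolutelyContinuousOnInterval_intervalIntegral ha)
  have hZ' : ∀ᵐ s, s ∈ Icc a b → deriv Z s ≤ y s + g s * Z s := by
    filter_upwards [hy'.ae_hasDerivAt_integral, hh'.ae_hasDerivAt_integral, hineq,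
      compl_mem_ae_iff.mpr (measure_singleton a)] with s hY' hH' hs hs_ne hsI
    have hsu : s ∈ uIcc a b := by rwa [uIcc_of_le hab]
    have hd : HasDerivAt Z (1 * Y s + (s - a) * y' s + (s - a) * h s) s :=
      (((hasDerivAt_id s).sub_const a).mul ((hY' hsu a ha).const_add (y a))).add (hH' hsu a ha)
    have hYs : Y s = y s := (hFTC s hsI).symm
    have hHs : 0 ≤ H s := intervalIntegral.integral_nonneg hsI.1 fun τ hτ ↦
      mul_nonneg (sub_nonneg.mpr hτ.1) (hh0 τ ⟨hτ.1, hτ.2.trans hsI.2⟩)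
    have hweighted := mul_le_mul_of_nonneg_left
      (hs ⟨lt_of_le_of_ne hsI.1 (Ne.symm hs_ne), hsI.2⟩) (sub_nonneg.mpr hsI.1)
    rw [hd.deriv]
    simp only [Z, hYs]
    nlinarith [hg0 s hsI]
  have hZa : Z a = 0 := by simp [Z, H]
  have hZb : Z b = (b - a) * y b + ∫ τ in a..b, (τ - a) * h τ := by
    simp only [Z, H, Y, ← hFTC b (right_mem_Icc.mpr hab)]
  simpa [hZa, hZb] using hZ.le_exp_integral_mul_of_ae_deriv_le hab hy hg hy0 hg0 hZ'

theorem stmt_4_general (ε T : ℝ) (y y' h g : ℝ → ℝ)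
    (hy0 : ∀ t ∈ Set.Icc ε T, 0 ≤ y t)
    (hy'int : IntervalIntegrable y' volume ε T)
    (hyint : IntervalIntegrable y volume ε T)
    (hhint : IntervalIntegrable h volume ε T)
    (hh0 : ∀ t ∈ Set.Icc ε T, 0 ≤ h t)
    (hgint : IntervalIntegrable g volume ε T)
    (hg0 : ∀ t ∈ Set.Icc ε T, 0 ≤ g t)
    (hFTC : ∀ t ∈ Set.Icc ε T, y t = y ε + ∫ s in ε..t, y' s)
    (hineq : ∀ᵐ t ∂(volume : Measure ℝ), t ∈ Set.Ioc ε T → y' t + h t ≤ g t * y t) :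
    ∀ t ∈ Set.Icc ε T,
      (t - ε) * y t + ∫ τ in ε..t, (τ - ε) * h τ ≤
        Real.exp ((t - ε) + ∫ τ in ε..t, g τ) * ∫ τ in ε..t, y τ := by
  intro t ht
  have hsub : uIcc ε t ⊆ uIcc ε T := uIcc_subset_uIcc_left (Icc_subset_uIcc ht)
  have hIcc : Icc ε t ⊆ Icc ε T := Icc_subset_Icc_right ht.2
  have hIoc : Ioc ε t ⊆ Ioc ε T := Ioc_subset_Ioc_right ht.2
  have hbound := sub_mul_add_integral_le_exp_integral_mul_integral ht.1
    (fun s hs ↦ hy0 s (hIcc hs)) (hy'int.mono_set hsub) (hyint.mono_set hsub)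
    (hhint.mono_set hsub) (fun s hs ↦ hh0 s (hIcc hs)) (hgint.mono_set hsub)
    (fun s hs ↦ hg0 s (hIcc hs)) (fun s hs ↦ hFTC s (hIcc hs))
    (by filter_upwards [hineq] with s hs hsI using hs (hIoc hsI))
  have hy : 0 ≤ ∫ τ in ε..t, y τ :=
    intervalIntegral.integral_nonneg ht.1 fun s hs ↦ hy0 s (hIcc hs)
  refine hbound.trans (mul_le_mul_of_nonneg_right (Real.exp_le_exp.mpr ?_) hy)
  linarith [ht.1]

/-- Weighted Gronwall lemma: if `y : [ε,T] → [0,∞)` is absolutely continuous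
(with a.e. derivative `y'`), `h, g ≥ 0` integrable, and `y' + h ≤ g y` a.e.,
then `(t-ε) y(t) + ∫_ε^t (τ-ε) h(τ) dτ ≤ exp((t-ε) + ∫_ε^t g) ∫_ε^t y`. -/
theorem stmt_4 (ε T : ℝ) (hεT : ε < T) (y y' h g : ℝ → ℝ)
    (hy0 : ∀ t ∈ Set.Icc ε T, 0 ≤ y t)
    (hy'int : IntervalIntegrable y' volume ε T)
    (hyint : IntervalIntegrable y volume ε T)
    (hhint : IntervalIntegrable h volume ε T)
    (hh0 : ∀ t ∈ Set.Icc ε T, 0 ≤ h t)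
    (hgint : IntervalIntegrable g volume ε T)
    (hg0 : ∀ t ∈ Set.Icc ε T, 0 ≤ g t)
    (hFTC : ∀ t ∈ Set.Icc ε T, y t = y ε + ∫ s in ε..t, y' s)
    (hineq : ∀ᵐ t ∂(volume : Measure ℝ), t ∈ Set.Ioc ε T → y' t + h t ≤ g t * y t) :
    ∀ t ∈ Set.Icc ε T,
      (t - ε) * y t + ∫ τ in ε..t, (τ - ε) * h τ ≤
        Real.exp ((t - ε) + ∫ τ in ε..t, g τ) * ∫ τ in ε..t, y τ :=
  stmt_4_general ε T y y' h g hy0 hy'int hyint hhint hh0 hgint hg0 hFTC hineq
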